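/- arXiv:1908.10845 — 2 statements merged into one kernel-verified Lean document; each statement's English description precedes it below -/
import Mathlib

section
/- Let G be a graph and let e = x_i x_j be an edge of G. Then (I(G)^{(2)} : e) = (I(G) : x_i) ∩ (I(G) : x_j). -/
open MvPolynomial

/-- The edge ideal of a graph `G` on vertices `Fin n`, inside `K[x_1,…,x_n]`. -/
noncomputable def edgeIdeal (K : Type*) [Field K] {n : ℕ} (G : SimpleGraph (Fin n)) :
    Ideal (MvPolynomial (Fin n) K) :=
  Ideal.span {m | ∃ i j : Fin n, G.Adj i j ∧ m = X i * X j}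

/-- `C` is a vertex cover of `G`. -/
def IsVertexCover {n : ℕ} (G : SimpleGraph (Fin n)) (C : Set (Fin n)) : Prop :=
  ∀ ⦃i j : Fin n⦄, G.Adj i j → i ∈ C ∨ j ∈ C

/-- `C` is a minimal vertex cover of `G`. -/
def IsMinVertexCover {n : ℕ} (G : SimpleGraph (Fin n)) (C : Set (Fin n)) : Prop :=
  IsVertexCover G C ∧ ∀ C' ⊆ C, IsVertexCover G C' → C' = C

/-- The monomial prime ideal generated by the variables in `C`. -/
noncomputable def varIdeal (K : Type*) [Field K] {n : ℕ} (C : Set (Fin n)) :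
    Ideal (MvPolynomial (Fin n) K) :=
  Ideal.span (X '' C)

/-- The `s`-th symbolic power of the edge ideal of `G`:
the intersection of `p_C ^ s` over all minimal vertex covers `C` of `G`. -/
noncomputable def symbPower (K : Type*) [Field K] {n : ℕ} (G : SimpleGraph (Fin n)) (s : ℕ) :
    Ideal (MvPolynomial (Fin n) K) :=
  ⨅ (C : Set (Fin n)) (_ : IsMinVertexCover G C), varIdeal K C ^ s

lemma edgeIdeal_eq (K : Type*) [Field K] {n : ℕ} (G : SimpleGraph (Fin n)) :
    edgeIdeal K G = Ideal.span ((fun s => monomial s (1 : K)) ''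
      {d | ∃ a b : Fin n, G.Adj a b ∧ d = Finsupp.single a 1 + Finsupp.single b 1}) := by
  unfold edgeIdeal
  congr 1
  ext x
  simp only [Set.mem_setOf_eq, Set.mem_image]
  constructor
  · rintro ⟨a, b, hab, rfl⟩
    exact ⟨_, ⟨a, b, hab, rfl⟩, by rw [X, X, monomial_mul, mul_one]⟩
  · rintro ⟨_, ⟨a, b, hab, rfl⟩, rfl⟩
    exact ⟨a, b, hab, by rw [X, X, monomial_mul, mul_one]⟩

lemma varIdeal_sq (K : Type*) [Field K] {n : ℕ} (C : Set (Fin n)) :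
    varIdeal K C ^ 2 = Ideal.span ((fun s => monomial s (1 : K)) ''
      {d | ∃ a ∈ C, ∃ b ∈ C, d = Finsupp.single a 1 + Finsupp.single b 1}) := by
  rw [varIdeal, sq, Ideal.span_mul_span']
  congr 1
  ext x
  simp only [Set.mem_mul, Set.mem_image, Set.mem_setOf_eq]
  constructor
  · rintro ⟨_, ⟨a, ha, rfl⟩, _, ⟨b, hb, rfl⟩, rfl⟩
    exact ⟨_, ⟨a, ha, b, hb, rfl⟩, by rw [X, X, monomial_mul, mul_one]⟩
  · rintro ⟨_, ⟨a, ha, b, hb, rfl⟩, rfl⟩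
    exact ⟨X a, ⟨a, ha, rfl⟩, X b, ⟨b, hb, rfl⟩, by rw [X, X, monomial_mul, mul_one]⟩

lemma exists_min_cover {n : ℕ} (G : SimpleGraph (Fin n)) (C' : Set (Fin n))
    (h : IsVertexCover G C') : ∃ C, C ⊆ C' ∧ IsMinVertexCover G C := by
  classical
  set T : Finset (Finset (Fin n)) :=
    Finset.univ.filter (fun D => ↑D ⊆ C' ∧ IsVertexCover G (↑D : Set (Fin n))) with hT
  have hne : T.Nonempty := by
    refine ⟨(Set.toFinite C').toFinset, ?_⟩
    simp only [hT, Finset.mem_filter, Finset.mem_univ, true_and, Set.Finite.coe_toFinset]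
    exact ⟨subset_rfl, h⟩
  obtain ⟨D, hD, hDmin⟩ := Finset.exists_min_image T Finset.card hne
  simp only [hT, Finset.mem_filter, Finset.mem_univ, true_and] at hD
  refine ⟨↑D, hD.1, hD.2, ?_⟩
  intro C'' hsub hcov
  have hfin : C''.Finite := Set.toFinite _
  have hsub' : hfin.toFinset ⊆ D := by
    intro x hx
    simp only [Set.Finite.mem_toFinset] at hx
    exact_mod_cast hsub hx
  have hmem : hfin.toFinset ∈ T := by
    simp only [hT, Finset.mem_filter, Finset.mem_univ, true_and, Set.Finite.coe_toFinset]
    exact ⟨hsub.trans hD.1, hcov⟩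
  have : hfin.toFinset = D :=
    Finset.eq_of_subset_of_card_le hsub' (hDmin _ hmem)
  calc C'' = ↑hfin.toFinset := (Set.Finite.coe_toFinset hfin).symm
    _ = ↑D := by rw [this]

lemma single_add_single_le {n : ℕ} {a b : Fin n} (hab : a ≠ b) {t : Fin n →₀ ℕ}
    (ha : t a ≠ 0) (hb : t b ≠ 0) : Finsupp.single a 1 + Finsupp.single b 1 ≤ t := by
  rw [Finsupp.le_def]
  intro c
  rw [Finsupp.add_apply, Finsupp.single_apply, Finsupp.single_apply]
  have ha' : 1 ≤ t a := Nat.one_le_iff_ne_zero.mpr ha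
  have hb' : 1 ≤ t b := Nat.one_le_iff_ne_zero.mpr hb
  split_ifs with h1 h2 h2
  · exact absurd (h1.trans h2.symm) hab
  · rw [← h1]; omega
  · rw [← h2]; omega
  · omega

lemma key {n : ℕ} {G : SimpleGraph (Fin n)} {i j : Fin n} (hij : G.Adj i j) (m : Fin n →₀ ℕ)
    (H : ∀ C, IsMinVertexCover G C → ∃ a ∈ C, ∃ b ∈ C,
      Finsupp.single a 1 + Finsupp.single b 1 ≤ m + Finsupp.single i 1 + Finsupp.single j 1) :
    ∃ a b : Fin n, G.Adj a b ∧
      Finsupp.single a 1 + Finsupp.single b 1 ≤ m + Finsupp.single j 1 := by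
  by_contra hcon
  push_neg at hcon
  set t : Fin n →₀ ℕ := m + Finsupp.single j 1 with ht
  have hcov : IsVertexCover G {a : Fin n | t a = 0} := by
    intro a b hab
    by_contra hc
    push_neg at hc
    simp only [Set.mem_setOf_eq] at hc
    exact hcon a b hab (single_add_single_le hab.ne hc.1 hc.2)
  obtain ⟨C, hCsub, hCmin⟩ := exists_min_cover G _ hcov
  obtain ⟨a, ha, b, hb, hle⟩ := H C hCmin
  have hta : m a + (if j = a then 1 else 0) = 0 := by
    have := hCsub ha
    simpa [ht, Finsupp.single_apply] using this
  have htb : m b + (if j = b then 1 else 0) = 0 := by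
    have := hCsub hb
    simpa [ht, Finsupp.single_apply] using this
  have hlea : ∀ c, (if a = c then 1 else 0) + (if b = c then 1 else 0) ≤
      m c + (if i = c then 1 else 0) + (if j = c then 1 else 0) := by
    intro c
    have := Finsupp.le_def.mp hle c
    simpa [Finsupp.single_apply] using this
  have haj : ¬ (j = a) := by intro h; rw [if_pos h] at hta; omega
  have hbj : ¬ (j = b) := by intro h; rw [if_pos h] at htb; omega
  rw [if_neg haj] at hta
  rw [if_neg hbj] at htb
  have hai : a = i := by
    by_contra hcontra
    have h := hlea a
    rw [if_pos rfl, if_neg (show ¬ (i = a) from fun h' => hcontra h'.symm),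
      if_neg haj] at h
    omega
  have hbi : b = i := by
    by_contra hcontra
    have h := hlea b
    rw [if_pos (show b = b from rfl), if_neg (show ¬ (i = b) from fun h' => hcontra h'.symm),
      if_neg hbj] at h
    omega
  have hmi : m i = 0 := by rw [← hai]; omega
  have h := hlea i
  rw [if_pos hai, if_pos hbi, if_pos (show i = i from rfl),
    if_neg (show ¬ (j = i) from fun h' => hij.ne h'.symm)] at h
  omega

lemma mul_edge_support {K : Type*} [Field K] {n : ℕ} (f : MvPolynomial (Fin n) K) (i j : Fin n) :
    (f * X i * X j).support =
      (f.support.map (addRightEmbedding (Finsupp.single i 1))).map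
        (addRightEmbedding (Finsupp.single j 1)) := by
  rw [support_mul_X, support_mul_X]

/-- For an edge `e = x_i x_j` of `G`,
`(I(G)^{(2)} : e) = (I(G) : x_i) ∩ (I(G) : x_j)`. -/
theorem stmt_1 (K : Type*) [Field K] {n : ℕ} (G : SimpleGraph (Fin n))
    (i j : Fin n) (hij : G.Adj i j) :
    (symbPower K G 2).colon (↑(Ideal.span {X i * X j} : Ideal (MvPolynomial (Fin n) K)) : Set (MvPolynomial (Fin n) K)) =
      (edgeIdeal K G).colon (↑(Ideal.span {X i} : Ideal (MvPolynomial (Fin n) K)) : Set (MvPolynomial (Fin n) K)) ⊓ (edgeIdeal K G).colon (↑(Ideal.span {X j} : Ideal (MvPolynomial (Fin n) K)) : Set (MvPolynomial (Fin n) K)) := by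
  ext f
  simp only [Ideal.mem_inf, Ideal.mem_colon_span_singleton]
  rw [symbPower]
  simp only [Submodule.mem_iInf]
  -- membership criteria
  have hsymb : ∀ (C : Set (Fin n)), f * (X i * X j) ∈ varIdeal K C ^ 2 ↔
      ∀ m ∈ f.support, ∃ a ∈ C, ∃ b ∈ C, Finsupp.single a 1 + Finsupp.single b 1 ≤
        m + Finsupp.single i 1 + Finsupp.single j 1 := by
    intro C
    rw [varIdeal_sq, mem_ideal_span_monomial_image, ← mul_assoc, support_mul_X, support_mul_X]
    constructor
    · intro h m hm
      have := h ((m + Finsupp.single i 1) + Finsupp.single j 1) (by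
        simp only [Finset.mem_map, addRightEmbedding_apply]
        exact ⟨m + Finsupp.single i 1, ⟨m, hm, rfl⟩, rfl⟩)
      obtain ⟨si, ⟨a, ha, b, hb, rfl⟩, hle⟩ := this
      exact ⟨a, ha, b, hb, hle⟩
    · intro h m hm
      simp only [Finset.mem_map, addRightEmbedding_apply] at hm
      obtain ⟨_, ⟨m0, hm0, rfl⟩, rfl⟩ := hm
      obtain ⟨a, ha, b, hb, hle⟩ := h m0 hm0
      exact ⟨_, ⟨a, ha, b, hb, rfl⟩, hle⟩
  have hedge : ∀ (k : Fin n), f * X k ∈ edgeIdeal K G ↔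
      ∀ m ∈ f.support, ∃ a b : Fin n, G.Adj a b ∧
        Finsupp.single a 1 + Finsupp.single b 1 ≤ m + Finsupp.single k 1 := by
    intro k
    rw [edgeIdeal_eq, mem_ideal_span_monomial_image, support_mul_X]
    constructor
    · intro h m hm
      have := h (m + Finsupp.single k 1) (by
        simp only [Finset.mem_map, addRightEmbedding_apply]
        exact ⟨m, hm, rfl⟩)
      obtain ⟨si, ⟨a, b, hab, rfl⟩, hle⟩ := this
      exact ⟨a, b, hab, hle⟩
    · intro h m hm
      simp only [Finset.mem_map, addRightEmbedding_apply] at hm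
      obtain ⟨m0, hm0, rfl⟩ := hm
      obtain ⟨a, b, hab, hle⟩ := h m0 hm0
      exact ⟨_, ⟨a, b, hab, rfl⟩, hle⟩
  constructor
  · intro hf
    have H : ∀ (C : Set (Fin n)), IsMinVertexCover G C → ∀ m ∈ f.support,
        ∃ a ∈ C, ∃ b ∈ C, Finsupp.single a 1 + Finsupp.single b 1 ≤
          m + Finsupp.single i 1 + Finsupp.single j 1 := by
      intro C hC
      exact (hsymb C).mp (hf C hC)
    constructor
    · rw [hedge i]
      intro m hm
      have H' : ∀ C, IsMinVertexCover G C → ∃ a ∈ C, ∃ b ∈ C,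
          Finsupp.single a 1 + Finsupp.single b 1 ≤
            m + Finsupp.single j 1 + Finsupp.single i 1 := by
        intro C hC
        obtain ⟨a, ha, b, hb, hle⟩ := H C hC m hm
        exact ⟨a, ha, b, hb, by rwa [add_right_comm]⟩
      exact key hij.symm m H'
    · rw [hedge j]
      intro m hm
      exact key hij m (fun C hC => H C hC m hm)
  · rintro ⟨h1, h2⟩ C hC
    -- easy direction: use that edgeIdeal ⊆ varIdeal C
    have hsub : edgeIdeal K G ≤ varIdeal K C := by
      rw [edgeIdeal, Ideal.span_le]
      rintro x ⟨a, b, hab, rfl⟩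
      rcases hC.1 hab with h | h
      · exact Ideal.mul_mem_right _ _ (Ideal.subset_span ⟨a, h, rfl⟩)
      · rw [mul_comm]
        exact Ideal.mul_mem_right _ _ (Ideal.subset_span ⟨b, h, rfl⟩)
    rcases hC.1 hij with h | h
    · have h1' : f * X j ∈ varIdeal K C := hsub h2
      have h2' : (X i : MvPolynomial (Fin n) K) ∈ varIdeal K C := Ideal.subset_span ⟨i, h, rfl⟩
      have : f * X j * X i ∈ varIdeal K C * varIdeal K C := Ideal.mul_mem_mul h1' h2'
      rw [sq]
      convert this using 1
      ring
    · have h1' : f * X i ∈ varIdeal K C := hsub h1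
      have h2' : (X j : MvPolynomial (Fin n) K) ∈ varIdeal K C := Ideal.subset_span ⟨j, h, rfl⟩
      have : f * X i * X j ∈ varIdeal K C * varIdeal K C := Ideal.mul_mem_mul h1' h2'
      rw [sq]
      convert this using 1
      ring
end

section
/- Let G be a graph, s ≥ 1 an integer, and let e_{i_1}, …, e_{i_s} be edges of G (repetitions allowed) with u = e_{i_1}⋯e_{i_s} the product of the corresponding quadratic monomials. Let A be the set of all minimal vertex covers C of G such that |C ∩ e_{i_j}| = 1 for every j with 1 ≤ j ≤ s. Then (I(G)^{(s+1)} : u) = ⋂_{C ∈ A} p_C (where the empty intersection is interpreted as S). -/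
open MvPolynomial

section Aux
variable {n : ℕ} (K : Type*) [Field K]

open Classical in
/-- weight of an exponent vector relative to a vertex set -/
noncomputable def wtC (C : Set (Fin n)) (d : Fin n →₀ ℕ) : ℕ :=
  ∑ i : Fin n, if i ∈ C then d i else 0

lemma wtC_add (C : Set (Fin n)) (d e : Fin n →₀ ℕ) :
    wtC C (d + e) = wtC C d + wtC C e := by
  classical
  unfold wtC
  rw [← Finset.sum_add_distrib]
  refine Finset.sum_congr rfl fun i _ => ?_
  by_cases h : i ∈ C <;> simp [h]

lemma wtC_zero (C : Set (Fin n)) : wtC C 0 = 0 := by simp [wtC]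

open Classical in
lemma wtC_single_base (C : Set (Fin n)) (i : Fin n) (m : ℕ) :
    wtC C (Finsupp.single i m) = if i ∈ C then m else 0 := by
  unfold wtC
  rw [Finset.sum_eq_single i]
  · simp
  · intro j _ hj; simp [Finsupp.single_apply, Ne.symm hj]
  · simp

lemma wtC_single_mem (C : Set (Fin n)) {i : Fin n} (hi : i ∈ C) (m : ℕ) :
    wtC C (Finsupp.single i m) = m := by
  classical rw [wtC_single_base, if_pos hi]

lemma wtC_single_not_mem (C : Set (Fin n)) {i : Fin n} (hi : i ∉ C) (m : ℕ) :
    wtC C (Finsupp.single i m) = 0 := by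
  classical rw [wtC_single_base, if_neg hi]

lemma wtC_sum {ι : Type*} (C : Set (Fin n)) (t : Finset ι) (d : ι → (Fin n →₀ ℕ)) :
    wtC C (∑ k ∈ t, d k) = ∑ k ∈ t, wtC C (d k) := by
  classical
  induction t using Finset.induction with
  | empty => simp [wtC_zero]
  | @insert _ _ h ih => rw [Finset.sum_insert h, Finset.sum_insert h, wtC_add, ih]

lemma wtC_pos_exists (C : Set (Fin n)) (d : Fin n →₀ ℕ) (h : 0 < wtC C d) :
    ∃ i ∈ C, 0 < d i := by
  classical
  by_contra hc
  push_neg at hc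
  have : wtC C d = 0 := by
    unfold wtC
    refine Finset.sum_eq_zero fun i _ => ?_
    by_cases hi : i ∈ C
    · simp [hi, Nat.le_zero.mp (hc i hi)]
    · simp [hi]
  omega

lemma mem_varIdeal_wt {C : Set (Fin n)} {f : MvPolynomial (Fin n) K}
    (hf : f ∈ varIdeal K C) : ∀ d ∈ f.support, 1 ≤ wtC C d := by
  classical
  refine Submodule.span_induction ?_ ?_ ?_ ?_ hf
  · rintro x ⟨i, hi, rfl⟩ d hd
    rw [support_X] at hd
    simp only [Finset.mem_singleton] at hd
    subst hd
    rw [wtC_single_mem C hi]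
  · intro d hd; simp at hd
  · intro x y _ _ hx hy d hd
    rcases Finset.mem_union.mp (Finsupp.support_add hd) with h | h
    · exact hx d h
    · exact hy d h
  · intro a x _ hx d hd
    rw [smul_eq_mul] at hd
    obtain ⟨d1, hd1, d2, hd2, rfl⟩ := Finset.mem_add.mp (support_mul a x hd)
    have := hx d2 hd2
    rw [wtC_add]
    omega

lemma mem_varIdeal_pow_wt {C : Set (Fin n)} {m : ℕ} {f : MvPolynomial (Fin n) K}
    (hf : f ∈ varIdeal K C ^ m) : ∀ d ∈ f.support, m ≤ wtC C d := by
  classical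
  induction m generalizing f with
  | zero => intro d _; omega
  | succ m ih =>
    rw [pow_succ] at hf
    refine Submodule.mul_induction_on hf ?_ ?_
    · intro x hx y hy d hd
      obtain ⟨d1, hd1, d2, hd2, rfl⟩ := Finset.mem_add.mp (support_mul x y hd)
      have h1 := ih hx d1 hd1
      have h2 := mem_varIdeal_wt K hy d2 hd2
      rw [wtC_add]; omega
    · intro x y hx hy d hd
      rcases Finset.mem_union.mp (Finsupp.support_add hd) with h | h
      · exact hx d h
      · exact hy d h

lemma monomial_mem_varIdeal_pow {C : Set (Fin n)} {m : ℕ} (c : K) (d : Fin n →₀ ℕ)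
    (h : m ≤ wtC C d) : monomial d c ∈ varIdeal K C ^ m := by
  induction m generalizing d with
  | zero => rw [pow_zero, Ideal.one_eq_top]; exact Submodule.mem_top
  | succ m ih =>
    obtain ⟨i, hi, hdi⟩ := wtC_pos_exists C d (by omega)
    have hle : Finsupp.single i 1 ≤ d := Finsupp.single_le_iff.mpr hdi
    have hde : Finsupp.single i 1 + (d - Finsupp.single i 1) = d :=
      add_tsub_cancel_of_le hle
    have hwt : m ≤ wtC C (d - Finsupp.single i 1) := by
      have := wtC_add C (Finsupp.single i 1) (d - Finsupp.single i 1)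
      rw [hde, wtC_single_mem C hi] at this
      omega
    have heq : monomial d c = X i * monomial (d - Finsupp.single i 1) c := by
      rw [X, monomial_mul, hde, one_mul]
    rw [heq, pow_succ']
    exact Ideal.mul_mem_mul (Ideal.subset_span ⟨i, hi, rfl⟩) (ih _ hwt)

lemma mem_varIdeal_pow_iff (C : Set (Fin n)) (m : ℕ) (f : MvPolynomial (Fin n) K) :
    f ∈ varIdeal K C ^ m ↔ ∀ d ∈ f.support, m ≤ wtC C d := by
  refine ⟨mem_varIdeal_pow_wt K, fun h => ?_⟩
  rw [← support_sum_monomial_coeff f]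
  exact Ideal.sum_mem _ fun d hd => monomial_mem_varIdeal_pow K _ d (h d hd)

lemma prod_monomial_one {ι : Type*} (t : Finset ι) (d : ι → (Fin n →₀ ℕ)) :
    ∏ k ∈ t, (monomial (d k) (1 : K)) = monomial (∑ k ∈ t, d k) 1 := by
  classical
  induction t using Finset.induction with
  | empty => simp
  | @insert _ _ h ih =>
    rw [Finset.prod_insert h, Finset.sum_insert h, ih, monomial_mul, one_mul]

end Aux

/-- For edges `e_{i_1}, …, e_{i_s}` of `G` (repetitions allowed), with
`u = e_{i_1} ⋯ e_{i_s}`, the colon ideal `(I(G)^{(s+1)} : u)` equals the intersection of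
the prime ideals `p_C`, over all minimal vertex covers `C` of `G` containing exactly one
endpoint of each edge `e_{i_j}` (the empty intersection being the whole ring). -/
theorem stmt_3 (K : Type*) [Field K] {n : ℕ} (G : SimpleGraph (Fin n))
    (s : ℕ) (hs : 1 ≤ s) (a b : Fin s → Fin n) (hab : ∀ k, G.Adj (a k) (b k)) :
    (symbPower K G (s + 1)).colon ((Ideal.span {∏ k, X (a k) * X (b k)} : Ideal (MvPolynomial (Fin n) K)) : Set (MvPolynomial (Fin n) K)) =
      ⨅ (C : Set (Fin n)) (_ : IsMinVertexCover G C ∧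
        ∀ k : Fin s, (a k ∈ C ∧ b k ∉ C) ∨ (a k ∉ C ∧ b k ∈ C)), varIdeal K C := by
  classical
  set D : Fin n →₀ ℕ :=
    ∑ k : Fin s, (Finsupp.single (a k) 1 + Finsupp.single (b k) 1) with hD
  have hu : (∏ k, X (a k) * X (b k) : MvPolynomial (Fin n) K) = monomial D 1 := by
    rw [hD, ← prod_monomial_one]
    refine Finset.prod_congr rfl fun k _ => ?_
    rw [X, X, monomial_mul, one_mul]
  have hwD : ∀ C : Set (Fin n), wtC C D =
      ∑ k : Fin s, ((if a k ∈ C then 1 else 0) + (if b k ∈ C then 1 else 0)) := by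
    intro C
    rw [hD, wtC_sum]
    refine Finset.sum_congr rfl fun k _ => ?_
    rw [wtC_add, wtC_single_base, wtC_single_base]
  ext f
  simp only [symbPower, Ideal.mem_colon_span_singleton, Submodule.mem_iInf]
  constructor
  · intro h C hCond
    obtain ⟨hC, hone⟩ := hCond
    have hwDs : wtC C D = s := by
      rw [hwD]
      rw [Finset.sum_congr rfl (fun k _ => ?_), Finset.sum_const, Finset.card_univ,
        Fintype.card_fin, smul_eq_mul, mul_one]
      rcases hone k with ⟨h1, h2⟩ | ⟨h1, h2⟩ <;> simp [h1, h2]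
    have hfu : f * monomial D 1 ∈ varIdeal K C ^ (s + 1) := by
      rw [← hu]; exact h C hC
    rw [← pow_one (varIdeal K C), mem_varIdeal_pow_iff]
    intro d hd
    have hmem : d + D ∈ (f * monomial D 1).support := by
      rw [mem_support_iff, coeff_mul_monomial, mul_one]
      exact mem_support_iff.mp hd
    have := mem_varIdeal_pow_wt K hfu _ hmem
    rw [wtC_add, hwDs] at this
    omega
  · intro h C hC
    rw [hu]
    by_cases hone : ∀ k : Fin s, (a k ∈ C ∧ b k ∉ C) ∨ (a k ∉ C ∧ b k ∈ C)
    · have hf := h C ⟨hC, hone⟩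
      have hwDs : s ≤ wtC C D := by
        rw [hwD]
        calc s = ∑ _k : Fin s, 1 := by simp
        _ ≤ _ := Finset.sum_le_sum fun k _ => by
            rcases hone k with ⟨h1, h2⟩ | ⟨h1, h2⟩ <;> simp [h1, h2]
      have huC : monomial D (1 : K) ∈ varIdeal K C ^ s :=
        monomial_mem_varIdeal_pow K 1 D hwDs
      rw [pow_succ']
      exact Ideal.mul_mem_mul hf huC
    · push_neg at hone
      obtain ⟨k0, hk0⟩ := hone
      have hboth : a k0 ∈ C ∧ b k0 ∈ C := by
        rcases hC.1 (hab k0) with h1 | h1 <;> tauto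
      have hge : s + 1 ≤ wtC C D := by
        rw [hwD]
        have hlt : ∑ _k : Fin s, 1 <
            ∑ k : Fin s, ((if a k ∈ C then 1 else 0) + (if b k ∈ C then 1 else 0)) := by
          refine Finset.sum_lt_sum (fun k _ => ?_) ⟨k0, Finset.mem_univ _, ?_⟩
          · rcases hC.1 (hab k) with h1 | h1 <;> simp [h1]
          · simp [hboth.1, hboth.2]
        simpa using hlt
      exact Ideal.mul_mem_left _ f (monomial_mem_varIdeal_pow K 1 D hge)
end
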